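/- Let f₀ : ℝ³ × ℝ³ → [0,∞) be measurable with finite mass, inertia, energy, and entropy: ∬ f₀ (1 + p₀|x|² + p₀ + |ln f₀|) dx dp < ∞. Suppose f : [0,T] → L¹ is nonnegative with nonincreasing H-function H(t) = ∬ f ln f dx dp ≤ H(0), conserved energy ∬ f p₀ dx dp = ∬ f₀ p₀ dx dp, and second-moment bound ∬ f(t) p₀(x − tp/p₀)² dx dp ≤ ∬ f₀(p₀|x|² + T²) dx dp for t ∈ [0,T]. Then sup_{0≤t≤T} ∬ f(t) |ln f(t)| dx dp ≤ ∬ f₀ [2T² + 2p₀(1+|x|²) + |ln f₀|] dx dp + C₁, where C₁ is the absolute Gaussian-tail constant. -/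

import Mathlib

/-!
Split `|ln f| = ln f + 2 (ln f)⁻`. The entropy part is controlled by `H(f(t)) ≤ H(f₀)`. For the
negative part use the pointwise bound `s (ln s)⁻ ≤ s w + 2 e^{-w/2}` with the weight
`w = p₀ |x - t p/p₀|² + p₀`: the term `s w` is controlled by the propagated moment and the conserved
energy, and `∫ e^{-w/2} dx dp` is bounded uniformly in `t`, because the shear `x ↦ x - t p/p₀`
preserves Lebesgue measure and `e^{-w/2} ≤ e^{-|x - t p/p₀|²/2} e^{-|p|/2}`.
-/

open MeasureTheory Real

noncomputable def energy (p : EuclideanSpace ℝ (Fin 3)) : ℝ := Real.sqrt (1 + ‖p‖ ^ 2)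

theorem mul_neg_log_le_two_mul_sqrt {s : ℝ} (hs : 0 < s) : s * -log s ≤ 2 * √s := by
  obtain ⟨u, hu, rfl⟩ : ∃ u, 0 < u ∧ s = u ^ 2 := ⟨√s, sqrt_pos.mpr hs, (sq_sqrt hs.le).symm⟩
  have hlog : log u⁻¹ ≤ u⁻¹ - 1 := log_le_sub_one_of_pos (inv_pos.mpr hu)
  rw [log_inv] at hlog
  calc u ^ 2 * -log (u ^ 2) = u * (2 * (u * -log u)) := by rw [log_pow]; push_cast; ring
    _ ≤ u * (2 * (u * u⁻¹)) := by gcongr; linarith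
    _ = 2 * √(u ^ 2) := by rw [sqrt_sq hu.le, mul_inv_cancel₀ hu.ne']; ring

theorem mul_negPart_log_le {s w : ℝ} (hs : 0 ≤ s) (hw : 0 ≤ w) :
    s * (log s)⁻ ≤ s * w + 2 * exp (-(w / 2)) := by
  rcases hs.eq_or_lt with rfl | hs
  · rw [zero_mul, zero_mul, zero_add]; positivity
  rcases le_or_gt (exp (-w)) s with hle | hlt
  · have : (log s)⁻ ≤ w := by
      rw [negPart_def]
      refine max_le ?_ hw
      have := log_le_log (exp_pos _) hle
      rw [log_exp] at this
      linarith
    nlinarith [exp_pos (-(w / 2))]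
  · have hlog : log s ≤ 0 := log_nonpos hs.le (hlt.le.trans (exp_le_one_iff.mpr (by linarith)))
    have hsqrt : √s ≤ exp (-(w / 2)) := by
      rw [show -(w / 2) = -w / 2 by ring, exp_half]
      exact sqrt_le_sqrt hlt.le
    rw [negPart_eq_neg.mpr hlog]
    nlinarith [mul_neg_log_le_two_mul_sqrt hs]

section Entropy

variable {α : Type*} [MeasurableSpace α] {μ : Measure α}

theorem MeasureTheory.Integrable.mul_of_abs_le_const_mul {f g h : α → ℝ}
    (hfg : Integrable (fun z => f z * g z) μ) (hm : AEStronglyMeasurable (fun z => f z * h z) μ)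
    (hf : ∀ z, 0 ≤ f z) (C : ℝ) (hle : ∀ z, |h z| ≤ C * g z) :
    Integrable (fun z => f z * h z) μ := by
  refine (hfg.const_mul C).mono' hm (ae_of_all _ fun z => ?_)
  rw [norm_mul, norm_of_nonneg (hf z), norm_eq_abs]
  nlinarith [mul_le_mul_of_nonneg_left (hle z) (hf z)]

theorem integral_mul_abs_log_le {f w : α → ℝ} (hfm : Measurable f) (hf : ∀ z, 0 ≤ f z)
    (hw : ∀ z, 0 ≤ w z) (hflog : Integrable (fun z => f z * |log (f z)|) μ)
    (hfw : Integrable (fun z => f z * w z) μ) (hexp : Integrable (fun z => exp (-(w z / 2))) μ) :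
    ∫ z, f z * |log (f z)| ∂μ ≤
      ∫ z, f z * log (f z) ∂μ + 2 * ∫ z, f z * w z ∂μ + 4 * ∫ z, exp (-(w z / 2)) ∂μ := by
  have hlog : Integrable (fun z => f z * log (f z)) μ :=
    hflog.mul_of_abs_le_const_mul (Measurable.aestronglyMeasurable (by fun_prop)) hf 1
      fun z => by simp
  have hneg : Integrable (fun z => f z * (log (f z))⁻) μ :=
    hflog.mul_of_abs_le_const_mul (Measurable.aestronglyMeasurable (by fun_prop)) hf 1
      fun z => by
      rw [one_mul, abs_of_nonneg (negPart_nonneg _), negPart_def]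
      exact max_le (neg_le_abs _) (abs_nonneg _)
  calc ∫ z, f z * |log (f z)| ∂μ
        = ∫ z, f z * log (f z) ∂μ + 2 * ∫ z, f z * (log (f z))⁻ ∂μ := by
        rw [← integral_const_mul, ← integral_add hlog (hneg.const_mul 2)]
        congr 1 with z
        have := abs_sub_eq_two_nsmul_negPart (log (f z))
        rw [nsmul_eq_mul] at this
        linear_combination f z * this
    _ ≤ ∫ z, f z * log (f z) ∂μ + 2 * ∫ z, (f z * w z + 2 * exp (-(w z / 2))) ∂μ := by
        gcongr
        · exact hfw.add (hexp.const_mul 2)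
        · exact fun z => mul_negPart_log_le (hf z) (hw z)
    _ = _ := by rw [integral_add hfw (hexp.const_mul 2), integral_const_mul]; ring

end Entropy

theorem integrable_exp_neg_mul_norm_rpow {E : Type*} [NormedAddCommGroup E] [NormedSpace ℝ E]
    [FiniteDimensional ℝ E] [Nontrivial E] [MeasurableSpace E] [BorelSpace E]
    (μ : Measure E) [μ.IsAddHaarMeasure] {b p : ℝ} (hb : 0 < b) (hp : 0 < p) :
    Integrable (fun x => exp (-b * ‖x‖ ^ p)) μ := by
  rw [integrable_fun_norm_addHaar μ (f := fun y => exp (-b * y ^ p))]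
  have hdim : (-1 : ℝ) < (Module.finrank ℝ E - 1 : ℕ) :=
    neg_one_lt_zero.trans_le (Nat.cast_nonneg _)
  refine (integrableOn_rpow_mul_exp_neg_mul_rpow hdim hp hb).congr_fun (fun y _ => ?_)
    measurableSet_Ioi
  simp [rpow_natCast]

section Shear

variable {E F : Type*} [AddGroup E] [MeasurableSpace E] [MeasurableSub₂ E]
  [MeasurableSpace F] {μ : Measure E} {ν : Measure F} [SFinite μ] [SFinite ν]
  [μ.IsAddRightInvariant] {v : F → E}

theorem measurePreserving_sub_prod (hv : Measurable v) :
    MeasurePreserving (fun z : E × F => (z.1 - v z.2, z.2)) (μ.prod ν) (μ.prod ν) :=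
  (Measure.measurePreserving_swap.comp <| (MeasurePreserving.id ν).skew_product
    (g := fun p x => x - v p) (by fun_prop)
    (ae_of_all _ fun p => map_sub_right_eq_self μ (v p))).comp Measure.measurePreserving_swap

theorem integrable_comp_sub_mul {g : E → ℝ} {h : F → ℝ} (hv : Measurable v)
    (hg : Integrable g μ) (hh : Integrable h ν) :
    Integrable (fun z : E × F => g (z.1 - v z.2) * h z.2) (μ.prod ν) :=
  (measurePreserving_sub_prod hv).integrable_comp_of_integrable (hg.mul_prod hh)

theorem integral_comp_sub_mul {g : E → ℝ} {h : F → ℝ} (hv : Measurable v)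
    (hg : Integrable g μ) (hh : Integrable h ν) :
    ∫ z, g (z.1 - v z.2) * h z.2 ∂μ.prod ν = (∫ x, g x ∂μ) * ∫ p, h p ∂ν := by
  have hΦ := measurePreserving_sub_prod (μ := μ) (ν := ν) hv
  have hmap := integral_map (f := fun z : E × F => g z.1 * h z.2) hΦ.measurable.aemeasurable
    (hΦ.map_eq ▸ (hg.mul_prod hh).aestronglyMeasurable)
  rw [hΦ.map_eq] at hmap
  rw [← integral_prod_mul, hmap]

end Shear

section PhaseSpace

local notation "ℝ³" => EuclideanSpace ℝ (Fin 3)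

@[fun_prop]
theorem continuous_energy : Continuous energy := by unfold energy; fun_prop

theorem one_le_energy (p : ℝ³) : 1 ≤ energy p :=
  one_le_sqrt.mpr (by nlinarith [sq_nonneg ‖p‖])

theorem norm_le_energy (p : ℝ³) : ‖p‖ ≤ energy p :=
  le_sqrt_of_sq_le (by linarith)

noncomputable def kineticWeight (t : ℝ) (z : ℝ³ × ℝ³) : ℝ :=
  energy z.2 * ‖z.1 - t • ((energy z.2)⁻¹ • z.2)‖ ^ 2 + energy z.2

theorem kineticWeight_nonneg (t : ℝ) (z : ℝ³ × ℝ³) : 0 ≤ kineticWeight t z := by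
  have := one_le_energy z.2
  unfold kineticWeight; positivity

@[fun_prop]
theorem measurable_kineticWeight (t : ℝ) : Measurable (kineticWeight t) := by
  have := fun p => (one_le_energy p).trans_lt' one_pos |>.ne'
  unfold kineticWeight; fun_prop (disch := assumption)

theorem integrable_exp_neg_half_mul_sq_norm :
    Integrable fun x : ℝ³ => exp (-(1 / 2) * ‖x‖ ^ 2) := by
  simpa using integrable_exp_neg_mul_norm_rpow volume (by norm_num : (0 : ℝ) < 1 / 2) two_pos

theorem integrable_exp_neg_half_mul_norm : Integrable fun p : ℝ³ => exp (-(1 / 2) * ‖p‖) := by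
  simpa using integrable_exp_neg_mul_norm_rpow volume (by norm_num : (0 : ℝ) < 1 / 2) one_pos

noncomputable def gaussianTail : ℝ :=
  (∫ x : ℝ³, exp (-(1 / 2) * ‖x‖ ^ 2)) * ∫ p : ℝ³, exp (-(1 / 2) * ‖p‖)

theorem gaussianTail_pos : 0 < gaussianTail :=
  mul_pos (integral_exp_pos integrable_exp_neg_half_mul_sq_norm)
    (integral_exp_pos integrable_exp_neg_half_mul_norm)

theorem exp_neg_half_kineticWeight_le (t : ℝ) (z : ℝ³ × ℝ³) :
    exp (-(kineticWeight t z / 2)) ≤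
      exp (-(1 / 2) * ‖z.1 - t • ((energy z.2)⁻¹ • z.2)‖ ^ 2) * exp (-(1 / 2) * ‖z.2‖) := by
  rw [← exp_add, exp_le_exp, kineticWeight]
  nlinarith [one_le_energy z.2, norm_le_energy z.2, sq_nonneg ‖z.1 - t • ((energy z.2)⁻¹ • z.2)‖]

theorem integrable_exp_neg_half_kineticWeight (t : ℝ) :
    Integrable fun z : ℝ³ × ℝ³ => exp (-(kineticWeight t z / 2)) := by
  have hv : Measurable fun p : ℝ³ => t • ((energy p)⁻¹ • p) := by fun_prop
  rw [Measure.volume_eq_prod]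
  refine (integrable_comp_sub_mul hv integrable_exp_neg_half_mul_sq_norm
    integrable_exp_neg_half_mul_norm).mono' (by fun_prop) (ae_of_all _ fun z => ?_)
  rw [norm_of_nonneg (exp_pos _).le]
  exact exp_neg_half_kineticWeight_le t z

theorem integral_exp_neg_half_kineticWeight_le (t : ℝ) :
    ∫ z : ℝ³ × ℝ³, exp (-(kineticWeight t z / 2)) ≤ gaussianTail := by
  have hv : Measurable fun p : ℝ³ => t • ((energy p)⁻¹ • p) := by fun_prop
  have hint := integrable_exp_neg_half_kineticWeight t
  rw [Measure.volume_eq_prod] at hint ⊢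
  rw [gaussianTail, ← integral_comp_sub_mul hv integrable_exp_neg_half_mul_sq_norm
    integrable_exp_neg_half_mul_norm]
  exact integral_mono hint (integrable_comp_sub_mul hv integrable_exp_neg_half_mul_sq_norm
    integrable_exp_neg_half_mul_norm) (exp_neg_half_kineticWeight_le t)

theorem integral_mul_kineticWeight {f : ℝ³ × ℝ³ → ℝ} (hfm : Measurable f) (hf : ∀ z, 0 ≤ f z)
    (t : ℝ) (hfw : Integrable fun z => f z * kineticWeight t z) :
    ∫ z, f z * kineticWeight t z =
      (∫ z, f z * (energy z.2 * ‖z.1 - t • ((energy z.2)⁻¹ • z.2)‖ ^ 2)) +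
        ∫ z, f z * energy z.2 := by
  have hE (z : ℝ³ × ℝ³) : 0 ≤ energy z.2 := sqrt_nonneg _
  have hX (z : ℝ³ × ℝ³) : 0 ≤ energy z.2 * ‖z.1 - t • ((energy z.2)⁻¹ • z.2)‖ ^ 2 := by
    have := hE z; positivity
  rw [← integral_add]
  · simp only [kineticWeight, mul_add]
  · refine hfw.mul_of_abs_le_const_mul (Measurable.aestronglyMeasurable (by fun_prop)) hf 1
      fun z => ?_
    rw [abs_of_nonneg (hX z), one_mul, kineticWeight]; linarith [hE z]
  · refine hfw.mul_of_abs_le_const_mul (Measurable.aestronglyMeasurable (by fun_prop)) hf 1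
      fun z => ?_
    rw [abs_of_nonneg (hE z), one_mul, kineticWeight]; linarith [hX z]

theorem integral_mul_log_add_moments_le {f₀ : ℝ³ × ℝ³ → ℝ} (hm : Measurable f₀)
    (hf₀ : ∀ z, 0 ≤ f₀ z)
    (hint : Integrable fun z : ℝ³ × ℝ³ =>
      f₀ z * (1 + energy z.2 * ‖z.1‖ ^ 2 + energy z.2 + |log (f₀ z)|)) (T : ℝ) :
    (∫ z, f₀ z * log (f₀ z)) + 2 * (∫ z : ℝ³ × ℝ³, f₀ z * (energy z.2 * ‖z.1‖ ^ 2 + T ^ 2)) +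
        2 * ∫ z : ℝ³ × ℝ³, f₀ z * energy z.2 ≤
      ∫ z : ℝ³ × ℝ³, f₀ z * (2 * T ^ 2 + 2 * energy z.2 * (1 + ‖z.1‖ ^ 2) + |log (f₀ z)|) := by
  have hE (z : ℝ³ × ℝ³) : 0 ≤ energy z.2 := sqrt_nonneg _
  have hX (z : ℝ³ × ℝ³) : 0 ≤ energy z.2 * ‖z.1‖ ^ 2 := by have := hE z; positivity
  have hL (z : ℝ³ × ℝ³) := abs_nonneg (log (f₀ z))
  have hT : 0 ≤ T ^ 2 := sq_nonneg T
  have ilog := hint.mul_of_abs_le_const_mul (h := fun z => log (f₀ z))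
    (Measurable.aestronglyMeasurable (by fun_prop)) hf₀ 1 fun z => by linarith [hE z, hX z]
  have imom := hint.mul_of_abs_le_const_mul (h := fun z => energy z.2 * ‖z.1‖ ^ 2 + T ^ 2)
    (Measurable.aestronglyMeasurable (by fun_prop)) hf₀ (1 + T ^ 2) fun z => by
      rw [abs_of_nonneg (by linarith [hX z])]; nlinarith [hE z, hX z, hL z]
  have ien := hint.mul_of_abs_le_const_mul (h := fun z => energy z.2)
    (Measurable.aestronglyMeasurable (by fun_prop)) hf₀ 1 fun z => by
      rw [abs_of_nonneg (hE z)]; linarith [hX z, hL z]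
  have itarget := hint.mul_of_abs_le_const_mul
    (h := fun z => 2 * T ^ 2 + 2 * energy z.2 * (1 + ‖z.1‖ ^ 2) + |log (f₀ z)|)
    (Measurable.aestronglyMeasurable (by fun_prop)) hf₀ (2 * T ^ 2 + 2) fun z => by
      rw [abs_of_nonneg (by nlinarith [hE z, hX z, hL z])]; nlinarith [hE z, hX z, hL z]
  have i12 : Integrable fun z : ℝ³ × ℝ³ =>
      f₀ z * log (f₀ z) + 2 * (f₀ z * (energy z.2 * ‖z.1‖ ^ 2 + T ^ 2)) :=
    ilog.add (imom.const_mul 2)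
  calc _ = ∫ z : ℝ³ × ℝ³, (f₀ z * log (f₀ z) + 2 * (f₀ z * (energy z.2 * ‖z.1‖ ^ 2 + T ^ 2)) +
          2 * (f₀ z * energy z.2)) := by
        rw [integral_add i12 (ien.const_mul 2),
          integral_add ilog (imom.const_mul 2), integral_const_mul, integral_const_mul]
    _ ≤ _ := integral_mono (i12.add (ien.const_mul 2)) itarget fun z => by
        have := mul_le_mul_of_nonneg_left (le_abs_self (log (f₀ z))) (hf₀ z)
        linarith

end PhaseSpace

/-- A priori entropy bound: there is an absolute (Gaussian-tail) constant `C₁` such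
that if `f₀ ≥ 0` has finite mass, inertia, energy and entropy, and `f(t) ≥ 0` has
nonincreasing H-function, conserved energy, and the propagated second-moment bound,
then `sup_{0≤t≤T} ∬ f(t)|ln f(t)| ≤ ∬ f₀[2T² + 2p₀(1+|x|²) + |ln f₀|] + C₁`. -/
theorem stmt_17 :
    ∃ C₁ : ℝ, 0 < C₁ ∧
      ∀ (T : ℝ), 0 ≤ T →
      ∀ (f₀ : EuclideanSpace ℝ (Fin 3) × EuclideanSpace ℝ (Fin 3) → ℝ)
        (f : ℝ → EuclideanSpace ℝ (Fin 3) × EuclideanSpace ℝ (Fin 3) → ℝ),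
        Measurable f₀ → (∀ z, 0 ≤ f₀ z) →
        Integrable (fun z : EuclideanSpace ℝ (Fin 3) × EuclideanSpace ℝ (Fin 3) =>
          f₀ z * (1 + energy z.2 * ‖z.1‖ ^ 2 + energy z.2 + |Real.log (f₀ z)|)) →
        (∀ t ∈ Set.Icc (0 : ℝ) T, Measurable (f t) ∧ (∀ z, 0 ≤ f t z) ∧
          Integrable (fun z => f t z * |Real.log (f t z)|) ∧
          Integrable (fun z : EuclideanSpace ℝ (Fin 3) × EuclideanSpace ℝ (Fin 3) =>
            f t z * (energy z.2 * ‖z.1 - t • ((energy z.2)⁻¹ • z.2)‖ ^ 2 + energy z.2))) →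
        -- nonincreasing H-function
        (∀ t ∈ Set.Icc (0 : ℝ) T,
          (∫ z, f t z * Real.log (f t z)) ≤ ∫ z, f₀ z * Real.log (f₀ z)) →
        -- conserved energy
        (∀ t ∈ Set.Icc (0 : ℝ) T,
          (∫ z : EuclideanSpace ℝ (Fin 3) × EuclideanSpace ℝ (Fin 3),
            f t z * energy z.2)
          = ∫ z : EuclideanSpace ℝ (Fin 3) × EuclideanSpace ℝ (Fin 3),
              f₀ z * energy z.2) →
        -- propagated second-moment bound
        (∀ t ∈ Set.Icc (0 : ℝ) T,
          (∫ z : EuclideanSpace ℝ (Fin 3) × EuclideanSpace ℝ (Fin 3),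
            f t z * (energy z.2 * ‖z.1 - t • ((energy z.2)⁻¹ • z.2)‖ ^ 2))
          ≤ ∫ z : EuclideanSpace ℝ (Fin 3) × EuclideanSpace ℝ (Fin 3),
              f₀ z * (energy z.2 * ‖z.1‖ ^ 2 + T ^ 2)) →
        ∀ t ∈ Set.Icc (0 : ℝ) T,
          (∫ z, f t z * |Real.log (f t z)|)
            ≤ (∫ z : EuclideanSpace ℝ (Fin 3) × EuclideanSpace ℝ (Fin 3),
                f₀ z * (2 * T ^ 2 + 2 * energy z.2 * (1 + ‖z.1‖ ^ 2) + |Real.log (f₀ z)|))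
              + C₁ := by
  refine ⟨4 * gaussianTail, by linarith [gaussianTail_pos], ?_⟩
  intro T _ f₀ f hm₀ hf₀ hint₀ hreg hH hE hM t ht
  obtain ⟨hm, hf, hlog, hw⟩ := hreg t ht
  have hentropy := integral_mul_abs_log_le hm hf (kineticWeight_nonneg t) hlog hw
    (integrable_exp_neg_half_kineticWeight t)
  linarith [integral_mul_kineticWeight hm hf t hw, integral_exp_neg_half_kineticWeight_le t,
    integral_mul_log_add_moments_le hm₀ hf₀ hint₀ T, hH t ht, hE t ht, hM t ht]
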